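/- arXiv:1010.1425 — 4 statements merged into one kernel-verified Lean document; each statement's English description precedes it below -/
import Mathlib

section
/- (Tweedie's formula, first moment.) In the exponential family Bayes model with f_δ(z) = exp(zδ − ψ(δ)) f_0(z), prior g, and marginal f(z) = ∫ f_δ(z) g(δ) dδ, if f and f_0 are positive and differentiable at z and differentiation under the integral sign is valid, then the posterior mean satisfies E(δ | z) = −(d/dz) log(f_0(z)/f(z)) = f'(z)/f(z) − f_0'(z)/f_0(z). -/
open MeasureTheory Real

/-- Tweedie's formula, first moment: in the exponential family Bayes model
`f_δ(z) = exp(zδ − ψ(δ)) f_0(z)` with prior `g` and marginal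
`f(z) = (∫ exp(zδ − ψ(δ)) g(δ) dδ) · f_0(z)`, if `f, f_0 > 0` are differentiable at `z`
and differentiation under the integral sign is valid, then
`E(δ|z) = −(d/dz) log(f_0(z)/f(z)) = f'(z)/f(z) − f_0'(z)/f_0(z)`. -/
theorem stmt_1 (ψ g f0 f : ℝ → ℝ) (f0' : ℝ) (z : ℝ)
    (hf : ∀ t, f t = (∫ δ : ℝ, Real.exp (t * δ - ψ δ) * g δ) * f0 t)
    (hf0pos : ∀ t, 0 < f0 t) (hfpos : ∀ t, 0 < f t)
    -- differentiation under the integral sign for the marginal ratio: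
    (hm : HasDerivAt (fun t => ∫ δ : ℝ, Real.exp (t * δ - ψ δ) * g δ)
        (∫ δ : ℝ, δ * Real.exp (z * δ - ψ δ) * g δ) z)
    (hint : Integrable (fun δ : ℝ => δ * Real.exp (z * δ - ψ δ) * g δ))
    (hf0' : HasDerivAt f0 f0' z) :
    (∫ δ : ℝ, δ * (Real.exp (z * δ - ψ δ) * f0 z * g δ / f z))
        = -(deriv (fun t => Real.log (f0 t / f t)) z)
      ∧ (∫ δ : ℝ, δ * (Real.exp (z * δ - ψ δ) * f0 z * g δ / f z))
        = deriv f z / f z - f0' / f0 z := by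
  set M : ℝ := ∫ δ : ℝ, Real.exp (z * δ - ψ δ) * g δ with hM
  set M' : ℝ := ∫ δ : ℝ, δ * Real.exp (z * δ - ψ δ) * g δ with hM'
  have hfz : f z = M * f0 z := hf z
  have hf0ne : f0 z ≠ 0 := (hf0pos z).ne'
  have hfne : f z ≠ 0 := (hfpos z).ne'
  have hMne : M ≠ 0 := by
    intro h
    rw [h, zero_mul] at hfz
    exact hfne hfz
  -- the integral equals (f0 z / f z) * M'
  have hI : (∫ δ : ℝ, δ * (Real.exp (z * δ - ψ δ) * f0 z * g δ / f z))
      = (f0 z / f z) * M' := by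
    rw [hM', ← MeasureTheory.integral_const_mul]
    congr 1
    funext δ
    field_simp
  -- derivative of f
  have hfd : HasDerivAt f (M' * f0 z + M * f0') z := by
    have h := hm.mul hf0'
    exact h.congr_of_eventuallyEq (Filter.Eventually.of_forall fun t => hf t)
  have hderivf : deriv f z = M' * f0 z + M * f0' := hfd.deriv
  -- derivative of log (f0 / f)
  have hdiv : HasDerivAt (fun t => f0 t / f t)
      ((f0' * f z - f0 z * (M' * f0 z + M * f0')) / (f z) ^ 2) z :=
    hf0'.div hfd hfne
  have hlog : HasDerivAt (fun t => Real.log (f0 t / f t))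
      (((f0' * f z - f0 z * (M' * f0 z + M * f0')) / (f z) ^ 2) / (f0 z / f z)) z :=
    hdiv.log (div_ne_zero hf0ne hfne)
  have hderivlog := hlog.deriv
  constructor
  · rw [hI, hderivlog, hfz]
    field_simp
    ring
  · rw [hI, hderivf, hfz]
    field_simp
    ring
end

section
/- (Tweedie's formula, second moment.) Under the same exponential family Bayes model, if f and f_0 are twice differentiable at z and differentiation under the integral sign is valid, then the posterior variance satisfies Var(δ | z) = −(d²/dz²) log(f_0(z)/f(z)) = (d²/dz²) log f(z) − (d²/dz²) log f_0(z). -/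
/-!
Divide numerator and denominator of the posterior by `f₀ z`: the posterior moments become
`m₁ z / m z` and `m₂ z / m z`, where `m` is the normalising integral, `m' = m₁` and `m₁' = m₂`.
Hence `Var(δ | z) = m₂/m - (m₁/m)² = (log m)''(z)`, and `log m = -log (f₀/f) = log f - log f₀`.
-/

open MeasureTheory Real Filter Topology

lemma integral_mul_div_mul_cancel_right (w e g : ℝ → ℝ) {a c : ℝ} (hc : c ≠ 0) :
    ∫ δ, w δ * (e δ * c * g δ / (a * c)) = (∫ δ, w δ * e δ * g δ) / a := by
  rw [← integral_div]
  congr 1 with δ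
  field_simp

lemma hasDerivAt_deriv_log {m m' : ℝ → ℝ} {z m'' : ℝ}
    (hm : ∀ᶠ t in 𝓝 z, HasDerivAt m (m' t) t) (hm0 : ∀ᶠ t in 𝓝 z, m t ≠ 0)
    (hm' : HasDerivAt m' m'' z) :
    HasDerivAt (deriv fun s => log (m s)) (m'' / m z - (m' z / m z) ^ 2) z := by
  have hlog : deriv (fun s => log (m s)) =ᶠ[𝓝 z] fun t => m' t / m t := by
    filter_upwards [hm, hm0] with t ht ht0
    exact (ht.log ht0).deriv
  have hmz : m z ≠ 0 := hm0.self_of_nhds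
  refine ((hm'.div hm.self_of_nhds hmz).congr_of_eventuallyEq hlog).congr_deriv ?_
  field_simp

lemma deriv_deriv_add {L K : ℝ → ℝ} {z : ℝ}
    (hL : ∀ᶠ t in 𝓝 z, DifferentiableAt ℝ L t) (hK : ∀ᶠ t in 𝓝 z, DifferentiableAt ℝ K t)
    (hL' : DifferentiableAt ℝ (deriv L) z) (hK' : DifferentiableAt ℝ (deriv K) z) :
    deriv (deriv fun s => L s + K s) z = deriv (deriv L) z + deriv (deriv K) z := by
  have hsum : deriv (fun s => L s + K s) =ᶠ[𝓝 z] fun t => deriv L t + deriv K t := by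
    filter_upwards [hL, hK] with t hLt hKt
    exact deriv_fun_add hLt hKt
  rw [hsum.deriv_eq]
  exact deriv_fun_add hL' hK'

lemma ContDiffAt.differentiableAt_deriv {h : ℝ → ℝ} {z : ℝ} (hh : ContDiffAt ℝ 2 h z) :
    DifferentiableAt ℝ (deriv h) z :=
  (hh.derivWithin (m := 1) (by norm_num)).differentiableAt (by norm_num)

lemma ContDiffAt.eventually_differentiableAt {h : ℝ → ℝ} {z : ℝ} (hh : ContDiffAt ℝ 2 h z) :
    ∀ᶠ t in 𝓝 z, DifferentiableAt ℝ h t :=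
  (hh.eventually (by simp)).mono fun _ ht => ht.differentiableAt (by norm_num)

theorem stmt_2_general (ψ g f0 f m m1 : ℝ → ℝ) (z : ℝ)
    (hm1 : ∀ t, m1 t = ∫ δ : ℝ, δ * Real.exp (t * δ - ψ δ) * g δ)
    (hf : ∀ t, f t = m t * f0 t)
    (hf0pos : ∀ t, 0 < f0 t) (hmpos : ∀ t, 0 < m t)
    -- differentiation under the integral sign, twice:
    (hderiv1 : ∀ t, HasDerivAt m (m1 t) t)
    (hderiv2 : HasDerivAt m1 (∫ δ : ℝ, δ ^ 2 * Real.exp (z * δ - ψ δ) * g δ) z)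
    (hf0smooth : ContDiffAt ℝ 2 f0 z) :
    (∫ δ : ℝ, δ ^ 2 * (Real.exp (z * δ - ψ δ) * f0 z * g δ / f z))
        - (∫ δ : ℝ, δ * (Real.exp (z * δ - ψ δ) * f0 z * g δ / f z)) ^ 2
      = -(deriv (fun t => deriv (fun s => Real.log (f0 s / f s)) t) z)
    ∧ (∫ δ : ℝ, δ ^ 2 * (Real.exp (z * δ - ψ δ) * f0 z * g δ / f z))
        - (∫ δ : ℝ, δ * (Real.exp (z * δ - ψ δ) * f0 z * g δ / f z)) ^ 2
      = deriv (fun t => deriv (fun s => Real.log (f s)) t) z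
        - deriv (fun t => deriv (fun s => Real.log (f0 s)) t) z := by
  have hlog_m := hasDerivAt_deriv_log (.of_forall hderiv1) (.of_forall fun t => (hmpos t).ne')
    hderiv2
  have hvar : (∫ δ : ℝ, δ ^ 2 * (Real.exp (z * δ - ψ δ) * f0 z * g δ / f z))
        - (∫ δ : ℝ, δ * (Real.exp (z * δ - ψ δ) * f0 z * g δ / f z)) ^ 2
      = deriv (deriv fun s => log (m s)) z := by
    rw [hf z, integral_mul_div_mul_cancel_right _ _ _ (hf0pos z).ne',
      integral_mul_div_mul_cancel_right _ _ _ (hf0pos z).ne', ← hm1 z, hlog_m.deriv]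
  have hlog_quot : (fun s => log (f0 s / f s)) = fun s => -log (m s) := by
    funext s
    rw [hf s, div_mul_cancel_right₀ (hf0pos s).ne', log_inv]
  have hlog_f : (fun s => log (f s)) = fun s => log (m s) + log (f0 s) := by
    funext s
    rw [hf s, log_mul (hmpos s).ne' (hf0pos s).ne']
  have hlog_f0 : ContDiffAt ℝ 2 (fun s => log (f0 s)) z := hf0smooth.log (hf0pos z).ne'
  refine ⟨?_, ?_⟩
  · simp only [hvar, hlog_quot, deriv.fun_neg, neg_neg]
  · rw [hvar, hlog_f, deriv_deriv_add
      (.of_forall fun t => ((hderiv1 t).log (hmpos t).ne').differentiableAt)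
      hlog_f0.eventually_differentiableAt
      hlog_m.differentiableAt
      hlog_f0.differentiableAt_deriv]
    ring

/-- Tweedie's formula, second moment: in the exponential family Bayes model,
if `f` and `f_0` are twice differentiable at `z` (with differentiation under the integral
sign valid), then the posterior variance satisfies
`Var(δ|z) = −(d²/dz²) log(f_0(z)/f(z)) = (log f)''(z) − (log f_0)''(z)`. -/
theorem stmt_2 (ψ g f0 f m m1 : ℝ → ℝ) (z : ℝ)
    (hm : ∀ t, m t = ∫ δ : ℝ, Real.exp (t * δ - ψ δ) * g δ)
    (hm1 : ∀ t, m1 t = ∫ δ : ℝ, δ * Real.exp (t * δ - ψ δ) * g δ)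
    (hf : ∀ t, f t = m t * f0 t)
    (hf0pos : ∀ t, 0 < f0 t) (hmpos : ∀ t, 0 < m t)
    -- differentiation under the integral sign, twice:
    (hderiv1 : ∀ t, HasDerivAt m (m1 t) t)
    (hderiv2 : HasDerivAt m1 (∫ δ : ℝ, δ ^ 2 * Real.exp (z * δ - ψ δ) * g δ) z)
    (hint1 : Integrable (fun δ : ℝ => δ * Real.exp (z * δ - ψ δ) * g δ))
    (hint2 : Integrable (fun δ : ℝ => δ ^ 2 * Real.exp (z * δ - ψ δ) * g δ))
    (hf0smooth : ContDiffAt ℝ 2 f0 z) :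
    (∫ δ : ℝ, δ ^ 2 * (Real.exp (z * δ - ψ δ) * f0 z * g δ / f z))
        - (∫ δ : ℝ, δ * (Real.exp (z * δ - ψ δ) * f0 z * g δ / f z)) ^ 2
      = -(deriv (fun t => deriv (fun s => Real.log (f0 s / f s)) t) z)
    ∧ (∫ δ : ℝ, δ ^ 2 * (Real.exp (z * δ - ψ δ) * f0 z * g δ / f z))
        - (∫ δ : ℝ, δ * (Real.exp (z * δ - ψ δ) * f0 z * g δ / f z)) ^ 2
      = deriv (fun t => deriv (fun s => Real.log (f s)) t) z
        - deriv (fun t => deriv (fun s => Real.log (f0 s)) t) z :=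
  stmt_2_general ψ g f0 f m m1 z hm1 hf hf0pos hmpos hderiv1 hderiv2 hf0smooth
end

section
/- (Tweedie's formula for the normal case.) If δ has an arbitrary prior distribution G on ℝ and z | δ ~ N(δ, 1), with marginal density f(z) = ∫ φ(z − δ) dG(δ) where φ is the standard normal density, then f is smooth, strictly positive, and E(δ | z) = z + f'(z)/f(z), Var(δ | z) = 1 + (d²/dz²) log f(z). -/
open MeasureTheory Real

/-- The standard normal density evaluated at `z − δ`, as the likelihood `φ(z; δ, 1)`. -/
noncomputable def normPdf (m v x : ℝ) : ℝ :=
  Real.exp (-(x - m) ^ 2 / (2 * v)) / Real.sqrt (2 * Real.pi * v)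

noncomputable def Paux : ℕ → Polynomial ℝ
  | 0 => 1
  | n + 1 => (Paux n).derivative - Polynomial.X * Paux n

noncomputable def gaux (n : ℕ) (δ z : ℝ) : ℝ := (Paux n).eval (z - δ) * normPdf δ 1 z

lemma normPdf_pos (δ z : ℝ) : 0 < normPdf δ 1 z := by
  unfold normPdf
  apply div_pos (Real.exp_pos _) (Real.sqrt_pos.2 (by positivity))

lemma continuous_normPdf (z : ℝ) : Continuous fun δ => normPdf δ 1 z := by
  unfold normPdf; fun_prop

lemma continuous_gaux (n : ℕ) (z : ℝ) : Continuous fun δ => gaux n δ z := by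
  unfold gaux
  exact ((Paux n).continuous.comp (by fun_prop)).mul (continuous_normPdf z)

lemma hasDerivAt_normPdf (δ z : ℝ) :
    HasDerivAt (fun z => normPdf δ 1 z) ((δ - z) * normPdf δ 1 z) z := by
  have h1 : HasDerivAt (fun z : ℝ => -(z - δ) ^ 2 / (2 * 1)) (δ - z) z := by
    have := (((hasDerivAt_id z).sub_const δ).pow 2).neg.div_const (2 * 1)
    refine this.congr_deriv ?_
    simp; ring
  have h2 := (Real.hasDerivAt_exp (-(z - δ) ^ 2 / (2 * 1))).comp z h1
  have h3 := h2.div_const (Real.sqrt (2 * Real.pi * 1))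
  refine h3.congr_deriv ?_
  unfold normPdf; ring

lemma hasDerivAt_gaux (n : ℕ) (δ z : ℝ) :
    HasDerivAt (fun z => gaux n δ z) (gaux (n + 1) δ z) z := by
  have hp : HasDerivAt (fun z => (Paux n).eval (z - δ)) ((Paux n).derivative.eval (z - δ)) z := by
    have := ((Paux n).hasDerivAt (z - δ)).comp z ((hasDerivAt_id z).sub_const δ)
    exact this.congr_deriv (by simp)
  have := hp.mul (hasDerivAt_normPdf δ z)
  refine this.congr_deriv ?_
  simp [gaux, Paux]
  ring

lemma pow_mul_exp_le (i : ℕ) (x : ℝ) :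
    |x| ^ i * Real.exp (-x ^ 2 / 2) ≤ 1 + 2 ^ i * (i.factorial : ℝ) := by
  have hfac : (0:ℝ) < 2 ^ i * (i.factorial : ℝ) := by positivity
  rcases le_or_gt |x| 1 with h | h
  · have h1 : |x| ^ i ≤ 1 := pow_le_one₀ (abs_nonneg x) h
    have h2 : Real.exp (-x ^ 2 / 2) ≤ 1 := Real.exp_le_one_iff.2 (by nlinarith [sq_nonneg x])
    nlinarith [pow_nonneg (abs_nonneg x) i, Real.exp_pos (-x ^ 2 / 2)]
  · have hx : |x| ≤ x ^ 2 := by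
      have := sq_abs x
      nlinarith
    have h1 : |x| ^ i ≤ (x ^ 2) ^ i := pow_le_pow_left₀ (abs_nonneg x) hx i
    have h2 : (x ^ 2 / 2) ^ i / (i.factorial : ℝ) ≤ Real.exp (x ^ 2 / 2) := by
      calc (x ^ 2 / 2) ^ i / (i.factorial : ℝ)
          ≤ ∑ j ∈ Finset.range (i + 1), (x ^ 2 / 2) ^ j / (j.factorial : ℝ) := by
            apply Finset.single_le_sum (f := fun j => (x ^ 2 / 2) ^ j / (j.factorial : ℝ))
              (fun j _ => by positivity) (Finset.self_mem_range_succ i)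
        _ ≤ Real.exp (x ^ 2 / 2) := Real.sum_le_exp_of_nonneg (by positivity) _
    have h3 : (x ^ 2) ^ i ≤ 2 ^ i * (i.factorial : ℝ) * Real.exp (x ^ 2 / 2) := by
      have : (x ^ 2) ^ i = 2 ^ i * (x ^ 2 / 2) ^ i := by
        rw [div_pow, ← mul_div_assoc, mul_comm, mul_div_assoc, div_self (by positivity), mul_one]
      rw [this]
      have := (div_le_iff₀ (by positivity : (0:ℝ) < (i.factorial : ℝ))).1 h2
      nlinarith [pow_pos (by positivity : (0:ℝ) < 2) i]
    have h4 : |x| ^ i * Real.exp (-x ^ 2 / 2) ≤ 2 ^ i * (i.factorial : ℝ) := by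
      have he : Real.exp (-x ^ 2 / 2) = (Real.exp (x ^ 2 / 2))⁻¹ := by
        rw [← Real.exp_neg]; ring_nf
      rw [he, mul_inv_le_iff₀ (Real.exp_pos _)]
      calc |x| ^ i ≤ (x ^ 2) ^ i := h1
        _ ≤ 2 ^ i * (i.factorial : ℝ) * Real.exp (x ^ 2 / 2) := h3
    linarith

lemma poly_bound (p : Polynomial ℝ) : ∃ C : ℝ, ∀ x : ℝ, |p.eval x * Real.exp (-x ^ 2 / 2)| ≤ C := by
  refine ⟨∑ i ∈ Finset.range (p.natDegree + 1), |p.coeff i| * (1 + 2 ^ i * (i.factorial : ℝ)),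
    fun x => ?_⟩
  rw [abs_mul, Real.abs_exp]
  have h1 : |p.eval x| ≤ ∑ i ∈ Finset.range (p.natDegree + 1), |p.coeff i| * |x| ^ i := by
    rw [Polynomial.eval_eq_sum_range]
    refine (Finset.abs_sum_le_sum_abs _ _).trans ?_
    apply Finset.sum_le_sum
    intro i _
    rw [abs_mul, abs_pow]
  calc |p.eval x| * Real.exp (-x ^ 2 / 2)
      ≤ (∑ i ∈ Finset.range (p.natDegree + 1), |p.coeff i| * |x| ^ i) * Real.exp (-x ^ 2 / 2) :=
        mul_le_mul_of_nonneg_right h1 (Real.exp_pos _).le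
    _ = ∑ i ∈ Finset.range (p.natDegree + 1), |p.coeff i| * (|x| ^ i * Real.exp (-x ^ 2 / 2)) := by
        rw [Finset.sum_mul]; exact Finset.sum_congr rfl fun i _ => by ring
    _ ≤ ∑ i ∈ Finset.range (p.natDegree + 1), |p.coeff i| * (1 + 2 ^ i * (i.factorial : ℝ)) :=
        Finset.sum_le_sum fun i _ => mul_le_mul_of_nonneg_left (pow_mul_exp_le i x) (abs_nonneg _)

lemma gaux_bound (n : ℕ) : ∃ C : ℝ, ∀ δ z : ℝ, |gaux n δ z| ≤ C := by
  obtain ⟨C, hC⟩ := poly_bound (Paux n)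
  refine ⟨C / Real.sqrt (2 * Real.pi * 1), fun δ z => ?_⟩
  have hs : 0 < Real.sqrt (2 * Real.pi * 1) := Real.sqrt_pos.2 (by positivity)
  have : gaux n δ z
      = ((Paux n).eval (z - δ) * Real.exp (-(z - δ) ^ 2 / 2)) / Real.sqrt (2 * Real.pi * 1) := by
    unfold gaux normPdf; ring_nf
  rw [this, abs_div, abs_of_pos hs]
  gcongr
  exact hC _

/-! ### The complex extension, for analyticity -/

noncomputable def Fc (G : Measure ℝ) (w : ℂ) : ℂ := ∫ δ : ℝ, Complex.exp (-(w - δ) ^ 2 / 2) ∂G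

lemma cexp_hasDerivAt (δ : ℝ) (w : ℂ) :
    HasDerivAt (fun w : ℂ => Complex.exp (-(w - (δ:ℂ)) ^ 2 / 2))
      (-(w - δ) * Complex.exp (-(w - (δ:ℂ)) ^ 2 / 2)) w := by
  have h1 : HasDerivAt (fun w : ℂ => -(w - (δ:ℂ)) ^ 2 / 2) (-(w - δ)) w := by
    have := (((hasDerivAt_id w).sub_const (δ:ℂ)).pow 2).neg.div_const 2
    refine this.congr_deriv ?_
    simp; ring
  have h2 := (Complex.hasDerivAt_exp (-(w - (δ:ℂ)) ^ 2 / 2)).comp w h1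
  refine h2.congr_deriv ?_
  ring

lemma cexp_norm (δ : ℝ) (w : ℂ) :
    ‖Complex.exp (-(w - (δ:ℂ)) ^ 2 / 2)‖
      = Real.exp ((w.im ^ 2 - (w.re - δ) ^ 2) / 2) := by
  rw [Complex.norm_exp]
  congr 1
  have h : (-(w - (δ:ℂ)) ^ 2 / 2).re = -((w - δ)^2).re / 2 := by
    simp [Complex.div_re, Complex.normSq]
  rw [h]
  have h2 : ((w - (δ:ℂ)) ^ 2).re = (w.re - δ)^2 - w.im^2 := by
    simp [pow_two, Complex.mul_re]
  rw [h2]; ring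

lemma cexp_deriv_bound (δ : ℝ) (w₀ w : ℂ) (hw : w ∈ Metric.ball w₀ 1) :
    ‖-(w - (δ:ℂ)) * Complex.exp (-(w - (δ:ℂ)) ^ 2 / 2)‖
      ≤ Real.exp ((|w₀.im| + 1) ^ 2 / 2) * (1 + (|w₀.im| + 1)) := by
  set Y := |w₀.im| + 1 with hY
  have hYpos : 0 < Y := by positivity
  have him : |w.im| ≤ Y := by
    have h1 : ‖w - w₀‖ < 1 := by simpa [Metric.mem_ball, dist_eq_norm] using hw
    have h2 : |w.im - w₀.im| ≤ ‖w - w₀‖ := by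
      simpa using Complex.abs_im_le_norm (w - w₀)
    calc |w.im| = |(w.im - w₀.im) + w₀.im| := by ring_nf
      _ ≤ |w.im - w₀.im| + |w₀.im| := abs_add_le _ _
      _ ≤ Y := by rw [hY]; linarith
  set t := |w.re - δ| with ht
  have htnn : 0 ≤ t := abs_nonneg _
  have hnorm : ‖w - (δ:ℂ)‖ ≤ t + Y := by
    calc ‖w - (δ:ℂ)‖ ≤ |(w - (δ:ℂ)).re| + |(w - (δ:ℂ)).im| := Complex.norm_le_abs_re_add_abs_im _
      _ ≤ t + Y := by
          simp only [Complex.sub_re, Complex.ofReal_re, Complex.sub_im, Complex.ofReal_im,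
            sub_zero]
          exact add_le_add le_rfl him
  rw [norm_mul, norm_neg, cexp_norm]
  have hre : (w.im ^ 2 - (w.re - δ) ^ 2) / 2 ≤ (Y^2 - t^2) / 2 := by
    have h1 : w.im ^ 2 ≤ Y ^ 2 := by nlinarith [abs_nonneg w.im, _root_.sq_abs w.im]
    have h2 : t ^ 2 = (w.re - δ)^2 := _root_.sq_abs _
    nlinarith
  calc ‖w - (δ:ℂ)‖ * Real.exp ((w.im ^ 2 - (w.re - δ) ^ 2) / 2)
      ≤ (t + Y) * Real.exp ((Y^2 - t^2) / 2) := by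
        apply mul_le_mul hnorm (Real.exp_le_exp.2 hre) (Real.exp_pos _).le (by positivity)
    _ = Real.exp (Y^2/2) * ((t * Real.exp (-t^2/2)) + Y * Real.exp (-t^2/2)) := by
        rw [show (Y^2 - t^2)/2 = Y^2/2 + (-t^2/2) by ring, Real.exp_add]; ring
    _ ≤ Real.exp (Y^2/2) * (1 + Y) := by
        have h3 : t * Real.exp (-t^2/2) ≤ 1 := by
          have h4 : t ≤ Real.exp (t^2/2) := by
            have := Real.add_one_le_exp (t^2/2)
            nlinarith [sq_nonneg (t - 1)]
          have h5 : Real.exp (-t^2/2) = (Real.exp (t^2/2))⁻¹ := by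
            rw [← Real.exp_neg]; ring_nf
          rw [h5, mul_inv_le_iff₀ (Real.exp_pos _)]
          simpa using h4
        have h6 : Real.exp (-t^2/2) ≤ 1 := Real.exp_le_one_iff.2 (by nlinarith)
        have h7 : Y * Real.exp (-t^2/2) ≤ Y := by nlinarith [Real.exp_pos (-t^2/2)]
        have := Real.exp_pos (Y^2/2)
        nlinarith

section

variable (G : Measure ℝ) [IsProbabilityMeasure G]

lemma integrable_gaux (n : ℕ) (z : ℝ) : Integrable (fun δ => gaux n δ z) G := by
  obtain ⟨C, hC⟩ := gaux_bound n
  exact (integrable_const C).mono' (continuous_gaux n z).aestronglyMeasurable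
    (Filter.Eventually.of_forall fun δ => by simpa using hC δ z)

lemma hasDerivAt_Faux (n : ℕ) (z : ℝ) :
    HasDerivAt (fun z => ∫ δ, gaux n δ z ∂G) (∫ δ, gaux (n + 1) δ z ∂G) z := by
  obtain ⟨C, hC⟩ := gaux_bound (n + 1)
  have := hasDerivAt_integral_of_dominated_loc_of_deriv_le (μ := G)
    (F := fun z δ => gaux n δ z) (F' := fun z δ => gaux (n + 1) δ z)
    (bound := fun _ => C) (x₀ := z) (Metric.ball_mem_nhds z one_pos)
    (Filter.Eventually.of_forall fun x => (continuous_gaux n x).aestronglyMeasurable)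
    (integrable_gaux G n z)
    (continuous_gaux (n + 1) z).aestronglyMeasurable
    (Filter.Eventually.of_forall fun δ => fun x _ => by simpa using hC δ x)
    (integrable_const C)
    (Filter.Eventually.of_forall fun δ => fun x _ => hasDerivAt_gaux n δ x)
  exact this.2

lemma cexp_cont (w : ℂ) : Continuous fun δ : ℝ => Complex.exp (-(w - (δ:ℂ)) ^ 2 / 2) := by
  fun_prop

lemma cexp_integrable (w : ℂ) :
    Integrable (fun δ : ℝ => Complex.exp (-(w - (δ:ℂ)) ^ 2 / 2)) G := by
  refine (integrable_const (Real.exp (w.im ^ 2 / 2))).mono'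
    (cexp_cont w).aestronglyMeasurable (Filter.Eventually.of_forall fun δ => ?_)
  rw [cexp_norm]
  apply Real.exp_le_exp.2
  nlinarith [sq_nonneg (w.re - δ)]

lemma Fc_differentiable : Differentiable ℂ (Fc G) := by
  intro w₀
  obtain ⟨-, hd⟩ := hasDerivAt_integral_of_dominated_loc_of_deriv_le (μ := G)
    (F := fun w (δ : ℝ) => Complex.exp (-(w - (δ:ℂ)) ^ 2 / 2))
    (F' := fun w (δ : ℝ) => -(w - (δ:ℂ)) * Complex.exp (-(w - (δ:ℂ)) ^ 2 / 2))
    (bound := fun _ => Real.exp ((|w₀.im| + 1) ^ 2 / 2) * (1 + (|w₀.im| + 1)))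
    (x₀ := w₀) (Metric.ball_mem_nhds w₀ one_pos)
    (Filter.Eventually.of_forall fun w => (cexp_cont w).aestronglyMeasurable)
    (cexp_integrable G w₀)
    (Continuous.aestronglyMeasurable (by fun_prop))
    (Filter.Eventually.of_forall fun δ w hw => cexp_deriv_bound δ w₀ w hw)
    (integrable_const _)
    (Filter.Eventually.of_forall fun δ w _ => cexp_hasDerivAt δ w)
  exact hd.differentiableAt

omit [IsProbabilityMeasure G] in
lemma Fc_real (z : ℝ) :
    Fc G z = ((∫ δ : ℝ, Real.exp (-(z - δ) ^ 2 / 2) ∂G : ℝ) : ℂ) := by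
  unfold Fc
  have he : ∀ δ : ℝ, Complex.exp (-((z:ℂ) - δ) ^ 2 / 2)
      = ((Real.exp (-(z - δ) ^ 2 / 2) : ℝ) : ℂ) := by
    intro δ
    rw [Complex.ofReal_exp]
    congr 1
    push_cast
    ring
  calc ∫ δ : ℝ, Complex.exp (-((z:ℂ) - δ) ^ 2 / 2) ∂G
      = ∫ δ : ℝ, ((Real.exp (-(z - δ) ^ 2 / 2) : ℝ) : ℂ) ∂G :=
        integral_congr_ae (Filter.Eventually.of_forall he)
    _ = ((∫ δ : ℝ, Real.exp (-(z - δ) ^ 2 / 2) ∂G : ℝ) : ℂ) := integral_ofReal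

lemma contDiff_f (f : ℝ → ℝ) (hf : ∀ z, f z = ∫ δ : ℝ, normPdf δ 1 z ∂G) :
    ContDiff ℝ (⊤ : ℕ∞) f := by
  have hA : AnalyticOnNhd ℂ (Fc G) Set.univ :=
    Complex.analyticOnNhd_univ_iff_differentiable.2 (Fc_differentiable G)
  have hc : ContDiff ℂ ⊤ (Fc G) := hA.contDiff
  have hcr : ContDiff ℝ (⊤ : ℕ∞) (Fc G) := (hc.restrict_scalars ℝ).of_le le_top
  have hcomp : ContDiff ℝ (⊤ : ℕ∞) (fun z : ℝ =>
      Complex.reCLM (Fc G (Complex.ofRealCLM z)) / Real.sqrt (2 * Real.pi * 1)) :=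
    (Complex.reCLM.contDiff.comp (hcr.comp Complex.ofRealCLM.contDiff)).div_const _
  have hfe : f = fun z : ℝ =>
      Complex.reCLM (Fc G (Complex.ofRealCLM z)) / Real.sqrt (2 * Real.pi * 1) := by
    funext z
    rw [hf z]
    simp only [Complex.ofRealCLM_apply, Complex.reCLM_apply, Fc_real, Complex.ofReal_re]
    rw [← integral_div]
    apply integral_congr_ae
    filter_upwards with δ
    unfold normPdf
    norm_num
  rw [hfe]
  exact hcomp

end

/-- Tweedie's formula for the normal case: if `δ` has an arbitrary prior
probability distribution `G` on `ℝ` and `z | δ ~ N(δ, 1)`, with marginal density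
`f(z) = ∫ φ(z − δ) dG(δ)` (and `∫ δ² φ(z−δ) dG(δ) < ∞` for each `z`), then `f` is smooth
and strictly positive, and
`E(δ|z) = z + f'(z)/f(z)`, `Var(δ|z) = 1 + (d²/dz²) log f(z)`, where the posterior of `δ`
given `z` has density `φ(z−δ)/f(z)` with respect to `dG(δ)`. -/
theorem stmt_14 (G : Measure ℝ) [IsProbabilityMeasure G]
    (hint : ∀ z : ℝ, Integrable (fun δ : ℝ => δ ^ 2 * normPdf δ 1 z) G)
    (f : ℝ → ℝ) (hf : ∀ z, f z = ∫ δ : ℝ, normPdf δ 1 z ∂G) :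
    ContDiff ℝ (⊤ : ℕ∞) f
      ∧ (∀ z, 0 < f z)
      ∧ (∀ z, (∫ δ : ℝ, δ * (normPdf δ 1 z / f z) ∂G) = z + deriv f z / f z)
      ∧ (∀ z, (∫ δ : ℝ, δ ^ 2 * (normPdf δ 1 z / f z) ∂G)
            - (∫ δ : ℝ, δ * (normPdf δ 1 z / f z) ∂G) ^ 2
          = 1 + deriv (fun t => deriv (fun s => Real.log (f s)) t) z) := by
  -- f is the 0-th auxiliary integral
  have hf0 : f = fun z => ∫ δ, gaux 0 δ z ∂G := by
    funext z
    rw [hf z]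
    simp [gaux, Paux]
  -- integrability facts
  have hInt0 : ∀ z, Integrable (fun δ => normPdf δ 1 z) G := by
    intro z
    have := integrable_gaux G 0 z
    simpa [gaux, Paux] using this
  have hInt1 : ∀ z, Integrable (fun δ => δ * normPdf δ 1 z) G := by
    intro z
    refine ((hint z).add (hInt0 z)).mono'
      ((continuous_id.mul (continuous_normPdf z)).aestronglyMeasurable)
      (Filter.Eventually.of_forall fun δ => ?_)
    have hp := normPdf_pos δ z
    have h1 : |δ| ≤ δ ^ 2 + 1 := by nlinarith [sq_nonneg (|δ| - 1), _root_.sq_abs δ, abs_nonneg δ]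
    have hn : ‖δ * normPdf δ 1 z‖ = |δ| * normPdf δ 1 z := by
      rw [norm_mul, Real.norm_eq_abs, Real.norm_eq_abs, abs_of_pos hp]
    rw [hn]
    simp only [Pi.add_apply]
    nlinarith
  -- positivity
  have hpos : ∀ z, 0 < f z := by
    intro z
    rw [hf z]
    refine (integral_pos_iff_support_of_nonneg (fun δ => (normPdf_pos δ z).le) (hInt0 z)).2 ?_
    have hsupp : Function.support (fun δ => normPdf δ 1 z) = Set.univ :=
      Set.eq_univ_of_forall fun δ => (normPdf_pos δ z).ne'
    rw [hsupp]
    simp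
  -- derivative identities
  have hd0 : ∀ z, HasDerivAt f (∫ δ, gaux 1 δ z ∂G) z := by
    intro z; rw [hf0]; exact hasDerivAt_Faux G 0 z
  have hF1 : ∀ z, (∫ δ, gaux 1 δ z ∂G)
      = (∫ δ, δ * normPdf δ 1 z ∂G) - z * f z := by
    intro z
    have he : (fun δ => gaux 1 δ z) = fun δ => δ * normPdf δ 1 z - z * normPdf δ 1 z := by
      funext δ; simp [gaux, Paux]; ring
    rw [he, integral_sub (hInt1 z) ((hInt0 z).const_mul z), integral_const_mul, ← hf z]
  have hF2 : ∀ z, (∫ δ, gaux 2 δ z ∂G)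
      = (∫ δ, δ ^ 2 * normPdf δ 1 z ∂G) - 2 * z * (∫ δ, δ * normPdf δ 1 z ∂G)
        + (z ^ 2 - 1) * f z := by
    intro z
    have ha : Integrable (fun δ => δ ^ 2 * normPdf δ 1 z - 2 * z * (δ * normPdf δ 1 z)) G :=
      (hint z).sub ((hInt1 z).const_mul (2 * z))
    have he : (fun δ => gaux 2 δ z)
        = fun δ => (δ ^ 2 * normPdf δ 1 z - 2 * z * (δ * normPdf δ 1 z))
            + (z ^ 2 - 1) * normPdf δ 1 z := by
      funext δ; simp [gaux, Paux]; ring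
    rw [he, integral_add ha ((hInt0 z).const_mul (z ^ 2 - 1)),
      integral_sub (hint z) ((hInt1 z).const_mul (2 * z)), integral_const_mul,
      integral_const_mul, ← hf z]
  refine ⟨contDiff_f G f hf, hpos, ?_, ?_⟩
  · intro z
    have hne : f z ≠ 0 := (hpos z).ne'
    have h1 : (fun δ : ℝ => δ * (normPdf δ 1 z / f z))
        = fun δ : ℝ => (δ * normPdf δ 1 z) / f z := by funext δ; ring
    rw [h1, integral_div, (hd0 z).deriv, hF1 z]
    field_simp
    ring
  · intro z
    have hne : ∀ s, f s ≠ 0 := fun s => (hpos s).ne'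
    have hnz : f z ≠ 0 := hne z
    have hld : deriv (fun s => Real.log (f s))
        = fun s => (∫ δ, gaux 1 δ s ∂G) / f s := by
      funext s
      exact ((hd0 s).log (hne s)).deriv
    have hq := (hasDerivAt_Faux G 1 z).div (hd0 z) (hne z)
    have h1 : (fun δ : ℝ => δ * (normPdf δ 1 z / f z))
        = fun δ : ℝ => (δ * normPdf δ 1 z) / f z := by funext δ; ring
    have h2 : (fun δ : ℝ => δ ^ 2 * (normPdf δ 1 z / f z))
        = fun δ : ℝ => (δ ^ 2 * normPdf δ 1 z) / f z := by funext δ; ring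
    simp only [hld]
    show _ = 1 + deriv ((fun z => ∫ δ, gaux 1 δ z ∂G) / f) z
    rw [hq.deriv, hF1 z, hF2 z, h1, h2, integral_div, integral_div]
    field_simp
    ring
end

section
/- (Monotonicity of normal-mixture fdr in a symmetric two-sided alternative.) Consider the model δ = 0 with probability π_0 and δ ~ (1/2)N(μ, σ²) + (1/2)N(−μ, σ²) with probability 1 − π_0 (μ > 0, σ² ≥ 0), with z | δ ~ N(δ, 1). Then fdr(z) = π_0 φ(z)/f(z) is a symmetric function of z that is strictly decreasing in |z|, where φ is the standard normal density and f(z) = π_0 φ(z) + (1−π_0)[φ(z; μ, σ²+1) + φ(z; −μ, σ²+1)]/2. -/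
/-!
Dividing numerator and denominator by `φ(z)` gives `fdr z = p0 / (p0 + K · R z)` with `K > 0`
and the likelihood ratio `R z = exp (((w − 1)/(2w)) z²) · cosh (m z / w)`, where `w = v + 1`.
`R` is even; on `[0, ∞)` its first factor is nondecreasing because `w ≥ 1`, and the `cosh`
factor is strictly increasing because `m > 0`.
-/

open MeasureTheory Real Set

lemma normPdf_pos_s15 {v : ℝ} (hv : 0 < v) (m x : ℝ) : 0 < normPdf m v x := by
  unfold normPdf
  have := sqrt_pos.2 (by positivity : 0 < 2 * π * v)
  positivity

lemma normPdf_eq_stdNormal_mul {w : ℝ} (hw : 0 < w) (m z : ℝ) :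
    normPdf m w z = normPdf 0 1 z *
      (exp (-m ^ 2 / (2 * w)) / sqrt w * exp ((w - 1) / (2 * w) * z ^ 2 + m / w * z)) := by
  have hexp : -(z - m) ^ 2 / (2 * w)
      = -(z - 0) ^ 2 / (2 * 1) + (-m ^ 2 / (2 * w) + ((w - 1) / (2 * w) * z ^ 2 + m / w * z)) := by
    field_simp
    ring
  unfold normPdf
  rw [hexp, exp_add, exp_add, mul_one, sqrt_mul (by positivity)]
  field_simp

noncomputable def symmLikelihoodRatio (m w z : ℝ) : ℝ :=
  exp ((w - 1) / (2 * w) * z ^ 2) * cosh (m / w * z)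

lemma normPdf_add_normPdf_neg {w : ℝ} (hw : 0 < w) (m z : ℝ) :
    normPdf m w z + normPdf (-m) w z
      = normPdf 0 1 z * (2 * exp (-m ^ 2 / (2 * w)) / sqrt w * symmLikelihoodRatio m w z) := by
  rw [normPdf_eq_stdNormal_mul hw, normPdf_eq_stdNormal_mul hw, symmLikelihoodRatio, cosh_eq,
    neg_sq, exp_add, exp_add, show -m / w * z = -(m / w * z) by ring]
  ring

lemma symmLikelihoodRatio_neg (m w z : ℝ) :
    symmLikelihoodRatio m w (-z) = symmLikelihoodRatio m w z := by
  simp only [symmLikelihoodRatio, neg_sq, mul_neg, cosh_neg]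

lemma symmLikelihoodRatio_strictMonoOn {m w : ℝ} (hm : 0 < m) (hw : 1 ≤ w) :
    StrictMonoOn (symmLikelihoodRatio m w) (Ici 0) := by
  intro x hx y hy hxy
  have hx : 0 ≤ x := hx
  have hy : 0 ≤ y := hy
  have hexp : exp ((w - 1) / (2 * w) * x ^ 2) ≤ exp ((w - 1) / (2 * w) * y ^ 2) := by
    gcongr
  have hcosh : cosh (m / w * x) < cosh (m / w * y) :=
    cosh_strictMonoOn (by positivity : (0 : ℝ) ≤ m / w * x)
      (by positivity : (0 : ℝ) ≤ m / w * y) (by gcongr)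
  exact mul_lt_mul' hexp hcosh (cosh_pos _).le (exp_pos _)

lemma strictAntiOn_div_add_mul {s : Set ℝ} {g : ℝ → ℝ} {a b : ℝ} (ha : 0 < a) (hb : 0 < b)
    (hg : ∀ x ∈ s, 0 ≤ g x) (hmono : StrictMonoOn g s) :
    StrictAntiOn (fun x => a / (a + b * g x)) s := by
  intro x hx y hy hxy
  have := hg x hx
  exact div_lt_div_of_pos_left ha (by positivity) (by gcongr; exact hmono hx hy hxy)

/-- Monotonicity of normal-mixture fdr in a symmetric two-sided alternative:
with `δ = 0` w.p. `p0 ∈ (0,1)` and `δ ~ (1/2)N(m, v) + (1/2)N(−m, v)` w.p. `1 − p0`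
(`m > 0`, `v ≥ 0`), and `z | δ ~ N(δ, 1)`, the local false discovery rate
`fdr(z) = p0 φ(z)/f(z)` with
`f(z) = p0 φ(z) + (1−p0)[φ(z; m, v+1) + φ(z; −m, v+1)]/2`
is symmetric in `z` and strictly decreasing in `|z|`. -/
theorem stmt_15 (p0 m v : ℝ) (hp0 : 0 < p0 ∧ p0 < 1) (hm : 0 < m) (hv : 0 ≤ v)
    (f fdr : ℝ → ℝ)
    (hf : ∀ z, f z = p0 * normPdf 0 1 z
        + (1 - p0) * (normPdf m (v + 1) z + normPdf (-m) (v + 1) z) / 2)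
    (hfdr : ∀ z, fdr z = p0 * normPdf 0 1 z / f z) :
    (∀ z, fdr z = fdr (-z)) ∧ StrictAntiOn fdr (Ici 0) := by
  obtain ⟨hp0, hp1⟩ := hp0
  have hw : 0 < v + 1 := by linarith
  set K := (1 - p0) * (exp (-m ^ 2 / (2 * (v + 1))) / sqrt (v + 1))
  have hK : 0 < K := mul_pos (by linarith) (div_pos (exp_pos _) (sqrt_pos.2 hw))
  have hf' : ∀ z, f z = normPdf 0 1 z * (p0 + K * symmLikelihoodRatio m (v + 1) z) := by
    intro z
    rw [hf, normPdf_add_normPdf_neg hw]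
    ring
  have hfdr' : fdr = fun z => p0 / (p0 + K * symmLikelihoodRatio m (v + 1) z) := by
    funext z
    rw [hfdr, hf', mul_comm p0, mul_div_mul_left _ _ (normPdf_pos_s15 one_pos 0 z).ne']
  refine ⟨fun z => by simp only [hfdr', symmLikelihoodRatio_neg], ?_⟩
  rw [hfdr']
  exact strictAntiOn_div_add_mul hp0 hK
    (fun z _ => (mul_pos (exp_pos _) (cosh_pos _)).le)
    (symmLikelihoodRatio_strictMonoOn hm (by linarith))
end
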